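/- Let ω be a weight on ℝ, ε ∈ (0,1/10), δ > 0 such that (1+ε)^{−1} ≤ ω(x₀,x₀+t)/ω(x₀−t,x₀) ≤ 1+ε for all x₀ ∈ ℝ and t ∈ (0,δ). For k ≥ 1, x₀ ∈ ℝ, t ∈ (0,δ), and y ∈ (t/2, t), define F_k(y) = ∫_{I(x₀,t)} log( ω(x−y/2^{k+1}, x+y/2^{k+1}) / (ω(x−y/2^k, x)^{1/2} ω(x, x+y/2^k)^{1/2}) ) dx, where I(x₀,t) = (x₀−t/2, x₀+t/2). Then |F_k(y)| ≤ 2^{−(k−1)} ε y. -/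
import Mathlib


open MeasureTheory intervalIntegral

/-- The mass `ω(a,b) = ∫_a^b ω` of the weight `ω` on the interval `(a,b)`. -/
noncomputable def wMass (ω : ℝ → ℝ) (a b : ℝ) : ℝ := ∫ x in a..b, ω x

/-- `F_k(y) = ∫_{I(x₀,t)} log(ω(x-y/2^{k+1}, x+y/2^{k+1}) /
(ω(x-y/2^k, x)^{1/2} ω(x, x+y/2^k)^{1/2})) dx`, where `I(x₀,t) = (x₀-t/2, x₀+t/2)`. -/
noncomputable def Fk (ω : ℝ → ℝ) (x₀ t : ℝ) (k : ℕ) (y : ℝ) : ℝ :=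
  ∫ x in (x₀ - t / 2)..(x₀ + t / 2),
    Real.log (wMass ω (x - y / 2 ^ (k + 1)) (x + y / 2 ^ (k + 1)) /
      (Real.sqrt (wMass ω (x - y / 2 ^ k) x) * Real.sqrt (wMass ω x (x + y / 2 ^ k))))

private lemma ratio_log_bound (ε M P Q : ℝ) (hε1 : (0:ℝ) < 1 + ε)
    (hM : 0 < M) (hP : 0 < P) (hQ : 0 < Q)
    (e1 : P ≤ (1 + ε) * M) (e2 : M ≤ (1 + ε) * P)
    (e3 : Q ≤ (1 + ε) * P) (e4 : P ≤ (1 + ε) * Q)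
    (hle : Real.log (1 + ε) ≤ ε) (hnn : 0 ≤ Real.log (1 + ε)) :
    |Real.log (P + Q) - Real.log (M + P)| ≤ ε := by
  have hup : Real.log (P + Q) - Real.log (M + P) ≤ Real.log (1 + ε) := by
    have h1 : P + Q ≤ (1 + ε) * (M + P) := by nlinarith
    have h2 : Real.log (P + Q) ≤ Real.log ((1 + ε) * (M + P)) :=
      Real.log_le_log (by linarith) h1
    rw [Real.log_mul hε1.ne' (by positivity)] at h2
    linarith
  have hlo : Real.log (M + P) - Real.log (P + Q) ≤ Real.log (1 + ε) := by
    have h1 : M + P ≤ (1 + ε) * (P + Q) := by nlinarith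
    have h2 : Real.log (M + P) ≤ Real.log ((1 + ε) * (P + Q)) :=
      Real.log_le_log (by linarith) h1
    rw [Real.log_mul hε1.ne' (by positivity)] at h2
    linarith
  rw [abs_le]
  constructor <;> linarith

/-- If adjacent intervals of equal length `< δ` have mass ratio within `[(1+ε)⁻¹, 1+ε]` with
`ε ∈ (0, 1/10)`, then for `k ≥ 1`, `t ∈ (0,δ)` and `y ∈ (t/2, t)`:
`|F_k(y)| ≤ 2^{-(k-1)} ε y`. -/
theorem abs_Fk_le (ω : ℝ → ℝ) (ε δ : ℝ) (hε : 0 < ε) (hε' : ε < 1 / 10) (hδ : 0 < δ)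
    (hω : ∀ x, 0 ≤ ω x) (hloc : LocallyIntegrable ω volume)
    (hpos : ∀ a b : ℝ, a < b → 0 < wMass ω a b)
    (hdbl : ∀ x₀ t : ℝ, 0 < t → t < δ →
      (1 + ε)⁻¹ ≤ wMass ω x₀ (x₀ + t) / wMass ω (x₀ - t) x₀ ∧
        wMass ω x₀ (x₀ + t) / wMass ω (x₀ - t) x₀ ≤ 1 + ε) :
    ∀ (k : ℕ), 1 ≤ k → ∀ x₀ t y : ℝ, 0 < t → t < δ → t / 2 < y → y < t →
      |Fk ω x₀ t k y| ≤ ε * y / 2 ^ (k - 1) := by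
  intro k hk x₀ t y ht htδ hy1 hy2
  have hy0 : 0 < y := lt_trans (by linarith) hy1
  have hε1 : (0:ℝ) < 1 + ε := by linarith
  set h : ℝ := y / 2 ^ (k + 1) with hh
  have h0 : 0 < h := by positivity
  have h4 : (4:ℝ) ≤ 2 ^ (k + 1) := by
    calc (4:ℝ) = 2 ^ 2 := by norm_num
    _ ≤ 2 ^ (k + 1) := pow_le_pow_right₀ one_le_two (by omega)
  have hy4 : h ≤ y / 4 := by
    rw [hh, div_le_div_iff₀ (by positivity) (by norm_num)]
    nlinarith
  have hhδ : h < δ := by linarith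
  -- basic integrability and additivity of wMass
  have hWint : ∀ a b : ℝ, IntervalIntegrable ω volume a b := fun a b =>
    (hloc.integrableOn_isCompact isCompact_uIcc).intervalIntegrable
  have hadd : ∀ a b c : ℝ, wMass ω a b + wMass ω b c = wMass ω a c := fun a b c =>
    intervalIntegral.integral_add_adjacent_intervals (hWint a b) (hWint b c)
  have hwm : ∀ p q : ℝ, wMass ω p q = (∫ u in (0:ℝ)..q, ω u) - ∫ u in (0:ℝ)..p, ω u :=
    fun p q => (integral_interval_sub_left (hWint 0 q) (hWint 0 p)).symm
  have hW : Continuous (fun x : ℝ => ∫ u in (0:ℝ)..x, ω u) :=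
    intervalIntegral.continuous_primitive hWint 0
  -- the function G
  set G : ℝ → ℝ := fun u => Real.log (wMass ω (u - h) (u + h)) with hG
  have hGc : Continuous G := by
    have hc : Continuous fun u : ℝ => wMass ω (u - h) (u + h) := by
      simp only [hwm]
      exact (hW.comp (continuous_id.add continuous_const)).sub
        (hW.comp (continuous_id.sub continuous_const))
    exact hc.log fun u => (hpos _ _ (by linarith)).ne'
  have hGi : ∀ p q : ℝ, IntervalIntegrable G volume p q := fun p q => hGc.intervalIntegrable p q
  have hGmc : Continuous fun x : ℝ => G (x - h) := hGc.comp (continuous_id.sub continuous_const)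
  have hGpc : Continuous fun x : ℝ => G (x + h) := hGc.comp (continuous_id.add continuous_const)
  -- pointwise key bound
  have hle : Real.log (1 + ε) ≤ ε := by
    have := Real.log_le_sub_one_of_pos hε1
    linarith
  have hnn : 0 ≤ Real.log (1 + ε) := Real.log_nonneg (by linarith)
  have key : ∀ x : ℝ, |G (x + h) - G x| ≤ ε := by
    intro x
    have hd1 := hdbl (x + h) h h0 hhδ
    have hd2 := hdbl x h h0 hhδ
    simp only [add_sub_cancel_right] at hd1
    obtain ⟨M, hM⟩ : ∃ M, wMass ω (x - h) x = M := ⟨_, rfl⟩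
    obtain ⟨P, hP⟩ : ∃ P, wMass ω x (x + h) = P := ⟨_, rfl⟩
    obtain ⟨Q, hQ⟩ : ∃ Q, wMass ω (x + h) (x + h + h) = Q := ⟨_, rfl⟩
    rw [hM, hP] at hd2
    rw [hP, hQ] at hd1
    have hMpos : 0 < M := hM ▸ hpos _ _ (by linarith)
    have hPpos : 0 < P := hP ▸ hpos _ _ (by linarith)
    have hQpos : 0 < Q := hQ ▸ hpos _ _ (by linarith)
    have e1 : P ≤ (1 + ε) * M := by
      have h1 := hd2.2
      rw [div_le_iff₀ hMpos] at h1
      linarith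
    have e2 : M ≤ (1 + ε) * P := by
      have h1 := hd2.1
      rw [le_div_iff₀ hMpos] at h1
      have h2 := mul_le_mul_of_nonneg_left h1 hε1.le
      rwa [← mul_assoc, mul_inv_cancel₀ hε1.ne', one_mul] at h2
    have e3 : Q ≤ (1 + ε) * P := by
      have h1 := hd1.2
      rw [div_le_iff₀ hPpos] at h1
      linarith
    have e4 : P ≤ (1 + ε) * Q := by
      have h1 := hd1.1
      rw [le_div_iff₀ hPpos] at h1
      have h2 := mul_le_mul_of_nonneg_left h1 hε1.le
      rwa [← mul_assoc, mul_inv_cancel₀ hε1.ne', one_mul] at h2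
    have hGx : G x = Real.log (M + P) := by
      simp only [hG]
      rw [← hM, ← hP, hadd (x - h) x (x + h)]
    have hGxh : G (x + h) = Real.log (P + Q) := by
      simp only [hG, add_sub_cancel_right]
      rw [← hP, ← hQ, hadd x (x + h) (x + h + h)]
    rw [hGx, hGxh]
    exact ratio_log_bound ε M P Q hε1 hMpos hPpos hQpos e1 e2 e3 e4 hle hnn
  -- rewrite Fk
  set a : ℝ := x₀ - t / 2 with ha
  set b : ℝ := x₀ + t / 2 with hb
  have hFkeq : Fk ω x₀ t k y = ∫ x in a..b, (G x - (G (x - h) + G (x + h)) / 2) := by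
    unfold Fk
    rw [← ha, ← hb, ← hh]
    apply intervalIntegral.integral_congr
    intro x _
    have h2k : y / 2 ^ k = 2 * h := by
      rw [hh, pow_succ]; ring
    rw [h2k]
    have hA : (0:ℝ) < wMass ω (x - h) (x + h) := hpos _ _ (by linarith)
    have hB : (0:ℝ) < wMass ω (x - 2 * h) x := hpos _ _ (by linarith)
    have hC : (0:ℝ) < wMass ω x (x + 2 * h) := hpos _ _ (by linarith)
    have eB : x - h - h = x - 2 * h := by ring
    have eB2 : x - h + h = x := by ring
    have eC : x + h - h = x := by ring
    have eC2 : x + h + h = x + 2 * h := by ring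
    simp only [hG, eB, eB2, eC, eC2]
    rw [Real.log_div hA.ne' (by positivity), Real.log_mul (Real.sqrt_ne_zero'.mpr hB)
      (Real.sqrt_ne_zero'.mpr hC), Real.log_sqrt hB.le, Real.log_sqrt hC.le]
    ring
  -- translate and telescope
  have i1 : ∫ x in a..b, G (x - h) = ∫ x in (a - h)..(b - h), G x :=
    integral_comp_sub_right G h
  have i2 : ∫ x in a..b, G (x + h) = ∫ x in (a + h)..(b + h), G x :=
    integral_comp_add_right G h
  have s1 : (∫ x in (a - h)..a, G x) + ∫ x in a..b, G x = ∫ x in (a - h)..b, G x :=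
    integral_add_adjacent_intervals (hGi _ _) (hGi _ _)
  have s2 : (∫ x in (a - h)..(b - h), G x) + ∫ x in (b - h)..b, G x = ∫ x in (a - h)..b, G x :=
    integral_add_adjacent_intervals (hGi _ _) (hGi _ _)
  have s3 : (∫ x in a..(a + h), G x) + ∫ x in (a + h)..(b + h), G x = ∫ x in a..(b + h), G x :=
    integral_add_adjacent_intervals (hGi _ _) (hGi _ _)
  have s4 : (∫ x in a..b, G x) + ∫ x in b..(b + h), G x = ∫ x in a..(b + h), G x :=
    integral_add_adjacent_intervals (hGi _ _) (hGi _ _)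
  have t1 : ∫ x in (a - h)..a, G (x + h) = ∫ x in a..(a + h), G x := by
    rw [integral_comp_add_right G h, sub_add_cancel]
  have t2 : ∫ x in (b - h)..b, G (x + h) = ∫ x in b..(b + h), G x := by
    rw [integral_comp_add_right G h, sub_add_cancel]
  have lin : Fk ω x₀ t k y = (∫ x in a..b, G x) -
      ((∫ x in a..b, G (x - h)) + ∫ x in a..b, G (x + h)) / 2 := by
    rw [hFkeq, integral_sub (hGi a b)
      (((hGmc.intervalIntegrable a b).add (hGpc.intervalIntegrable a b)).div_const 2),
      intervalIntegral.integral_div, integral_add (hGmc.intervalIntegrable a b) (hGpc.intervalIntegrable a b)]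
  have two_eq : 2 * Fk ω x₀ t k y =
      (∫ x in (a - h)..a, (G (x + h) - G x)) + ∫ x in (b - h)..b, (G x - G (x + h)) := by
    rw [integral_sub (hGpc.intervalIntegrable _ _) (hGi _ _),
        integral_sub (hGi _ _) (hGpc.intervalIntegrable _ _), t1, t2]
    rw [lin, i1, i2]
    linarith
  -- bound
  have b1 : |∫ x in (a - h)..a, (G (x + h) - G x)| ≤ ε * h := by
    have := intervalIntegral.norm_integral_le_of_norm_le_const
      (f := fun x => G (x + h) - G x) (a := a - h) (b := a) (C := ε)
      (fun x _ => by rw [Real.norm_eq_abs]; exact key x)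
    rw [Real.norm_eq_abs] at this
    have e : |a - (a - h)| = h := by rw [abs_of_pos (by linarith : (0:ℝ) < a - (a - h))]; ring
    rw [e] at this
    exact this
  have b2 : |∫ x in (b - h)..b, (G x - G (x + h))| ≤ ε * h := by
    have := intervalIntegral.norm_integral_le_of_norm_le_const
      (f := fun x => G x - G (x + h)) (a := b - h) (b := b) (C := ε)
      (fun x _ => by rw [Real.norm_eq_abs, abs_sub_comm]; exact key x)
    rw [Real.norm_eq_abs] at this
    have e : |b - (b - h)| = h := by rw [abs_of_pos (by linarith : (0:ℝ) < b - (b - h))]; ring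
    rw [e] at this
    exact this
  have hbd : |Fk ω x₀ t k y| ≤ ε * h := by
    have : |2 * Fk ω x₀ t k y| ≤ 2 * (ε * h) := by
      rw [two_eq]
      calc |(∫ x in (a - h)..a, (G (x + h) - G x)) + ∫ x in (b - h)..b, (G x - G (x + h))|
          ≤ |∫ x in (a - h)..a, (G (x + h) - G x)| + |∫ x in (b - h)..b, (G x - G (x + h))| :=
            abs_add_le _ _
        _ ≤ 2 * (ε * h) := by linarith
    rw [abs_mul, abs_two] at this
    linarith
  have hkk : (2:ℝ) ^ (k + 1) = 4 * 2 ^ (k - 1) := by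
    rw [show k + 1 = (k - 1) + 2 by omega, pow_add]; ring
  have : ε * h ≤ ε * y / 2 ^ (k - 1) := by
    rw [hh, hkk]
    have h1 : 0 ≤ ε * y / 2 ^ (k - 1) := by positivity
    calc ε * (y / (4 * 2 ^ (k - 1))) = ε * y / 2 ^ (k - 1) / 4 := by ring
    _ ≤ ε * y / 2 ^ (k - 1) := by linarith
  linarith
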